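/- arXiv:1807.04358 — 8 statements merged into one kernel-verified Lean document; each statement's English description precedes it below -/
import Mathlib

section
/- For every real s with 1/2 ≤ s ≤ 1, the function β_s(u) = log(u⁻¹ − 1)/(u − s) is strictly increasing on the interval (0, s). -/
open Real Set

/-- Classical inequality: `log t < (t - t⁻¹)/2` for `t > 1`. -/
lemma log_lt_half_sub {t : ℝ} (ht : 1 < t) : Real.log t < (t - t⁻¹) / 2 := by
  have key : StrictMonoOn (fun x : ℝ => (x - x⁻¹) / 2 - Real.log x) (Set.Ici 1) := by
    apply strictMonoOn_of_deriv_pos (convex_Ici 1)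
    · apply ContinuousOn.sub
      · exact ((continuousOn_id.sub (continuousOn_id.inv₀ (fun x hx => by
          simp only [mem_Ici, id] at hx ⊢; intro h; rw [h] at hx; linarith))).div_const 2)
      · exact Real.continuousOn_log.mono (fun x hx => by
          simp only [mem_Ici] at hx; simp; linarith)
    · intro x hx
      rw [interior_Ici] at hx
      have hx1 : (1:ℝ) < x := hx
      have hx0 : x ≠ 0 := by linarith
      have h1 : HasDerivAt (fun x : ℝ => (x - x⁻¹) / 2 - Real.log x)
          ((1 - -(x ^ 2)⁻¹) / 2 - x⁻¹) x :=
        (((hasDerivAt_id x).sub (hasDerivAt_inv hx0)).div_const 2).sub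
          (Real.hasDerivAt_log hx0)
      rw [h1.deriv, ← inv_pow]
      have hxi : x⁻¹ < 1 := by
        rw [inv_lt_one_iff₀]; right; exact hx1
      have h2 : 0 < (1 - x⁻¹) ^ 2 := pow_pos (by linarith) 2
      nlinarith
  have h1mem : (1:ℝ) ∈ Set.Ici (1:ℝ) := Set.mem_Ici.mpr le_rfl
  have htmem : t ∈ Set.Ici (1:ℝ) := le_of_lt ht
  have := key h1mem htmem ht
  simp only [inv_one, sub_self, Real.log_one] at this
  norm_num at this
  linarith

lemma key_ineq {s u : ℝ} (hs : 1 / 2 ≤ s) (hs1 : s ≤ 1) (hu0 : 0 < u) (hus : u < s) :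
    Real.log (u⁻¹ - 1) < (s - u) / (u * (1 - u)) := by
  have hu1 : u < 1 := lt_of_lt_of_le hus hs1
  have hden : 0 < u * (1 - u) := mul_pos hu0 (by linarith)
  rcases lt_or_ge u (1/2) with h | h
  · -- u < 1/2: use log t < (t - t⁻¹)/2 with t = u⁻¹ - 1 > 1
    have hinv : 2 < u⁻¹ := by
      nlinarith [mul_inv_cancel₀ hu0.ne']
    have ht : 1 < u⁻¹ - 1 := by linarith
    have hlog := log_lt_half_sub ht
    have hrw : u⁻¹ - 1 = (1 - u) / u := by field_simp
    have h1u : (1:ℝ) - u ≠ 0 := by linarith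
    have heq : (u⁻¹ - 1 - (u⁻¹ - 1)⁻¹) / 2 = (1/2 - u) / (u * (1 - u)) := by
      rw [hrw, inv_div]
      rw [div_eq_div_iff (by norm_num) hden.ne']
      field_simp [h1u]
      ring
    rw [heq] at hlog
    have hle : (1/2 - u) / (u * (1 - u)) ≤ (s - u) / (u * (1 - u)) := by
      gcongr
    linarith
  · -- u ≥ 1/2: log(u⁻¹ - 1) ≤ 0 < RHS
    have ht1 : u⁻¹ - 1 ≤ 1 := by
      have : u⁻¹ ≤ 2 := by
        rw [inv_le_comm₀ hu0 (by norm_num)]; linarith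
      linarith
    have hlog : Real.log (u⁻¹ - 1) ≤ 0 := Real.log_nonpos (by
      have : 1 < u⁻¹ := (one_lt_inv₀ hu0).mpr hu1
      linarith) ht1
    have : 0 < (s - u) / (u * (1 - u)) := div_pos (by linarith) hden
    linarith

/-- `β s u = log(u⁻¹ − 1) / (u − s)`. -/
noncomputable def beta (s u : ℝ) : ℝ := Real.log (u⁻¹ - 1) / (u - s)

theorem beta_strictMonoOn (s : ℝ) (hs : 1 / 2 ≤ s) (hs1 : s ≤ 1) :
    StrictMonoOn (beta s) (Set.Ioo 0 s) := by
  apply strictMonoOn_of_deriv_pos (convex_Ioo 0 s)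
  · -- continuity
    apply ContinuousOn.div
    · apply Real.continuousOn_log.comp (by fun_prop (disch := intro x hx; exact (hx.1).ne') :
        ContinuousOn (fun u : ℝ => u⁻¹ - 1) (Set.Ioo 0 s))
      intro x hx
      have hx1 : x < 1 := lt_of_lt_of_le hx.2 hs1
      have : 1 < x⁻¹ := (one_lt_inv₀ hx.1).mpr hx1
      simp only [Set.mem_compl_iff, Set.mem_singleton_iff]
      intro hc
      rw [sub_eq_zero] at hc
      rw [hc] at this
      linarith
    · fun_prop
    · intro x hx
      have : x - s < 0 := by linarith [hx.2]
      exact this.ne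
  · intro x hx
    rw [interior_Ioo] at hx
    obtain ⟨hx0, hxs⟩ := hx
    have hx1 : x < 1 := lt_of_lt_of_le hxs hs1
    have hxne : x ≠ 0 := hx0.ne'
    have htne : x⁻¹ - 1 ≠ 0 := by
      have : 1 < x⁻¹ := (one_lt_inv₀ hx0).mpr hx1
      intro hc; rw [sub_eq_zero] at hc; rw [hc] at this; exact lt_irrefl _ this
    have hxsne : x - s ≠ 0 := by intro hc; rw [sub_eq_zero] at hc; rw [hc] at hxs; exact lt_irrefl _ hxs
    have hnum : HasDerivAt (fun u : ℝ => Real.log (u⁻¹ - 1)) (-(x ^ 2)⁻¹ / (x⁻¹ - 1)) x :=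
      HasDerivAt.log ((hasDerivAt_inv hxne).sub_const 1) htne
    have hden : HasDerivAt (fun u : ℝ => u - s) 1 x := (hasDerivAt_id x).sub_const s
    have hderiv : HasDerivAt (beta s)
        ((-(x ^ 2)⁻¹ / (x⁻¹ - 1) * (x - s) - Real.log (x⁻¹ - 1) * 1) / (x - s) ^ 2) x :=
      hnum.div hden hxsne
    rw [hderiv.deriv]
    apply div_pos _ (by positivity)
    have hkey := key_ineq hs hs1 hx0 hxs
    have hrewrite : -(x ^ 2)⁻¹ / (x⁻¹ - 1) * (x - s) = (s - x) / (x * (1 - x)) := by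
      have h1x : (1:ℝ) - x ≠ 0 := by linarith
      field_simp
      ring
    rw [hrewrite]
    linarith
end

section
/- The function β_{1/2}(u) = log(u⁻¹ − 1)/(u − 1/2) is strictly increasing on the interval (0, 1/2) and strictly decreasing on the interval (1/2, 1). -/
open Real

lemma beta_hasDerivAt {u : ℝ} (hu0 : 0 < u) (hu1 : u < 1) (hu : u ≠ 1/2) :
    HasDerivAt (beta (1/2))
      ((Real.sinh (Real.log (u⁻¹ - 1)) - Real.log (u⁻¹ - 1)) / (u - 1/2)^2) u := by
  have ha : 0 < u⁻¹ - 1 := by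
    have : 1 < u⁻¹ := (one_lt_inv₀ hu0).mpr hu1
    linarith
  have hne : u - 1/2 ≠ 0 := sub_ne_zero.mpr hu
  have h1 : HasDerivAt (fun u : ℝ => u⁻¹ - 1) (-(u^2)⁻¹) u :=
    (hasDerivAt_inv hu0.ne').sub_const 1
  have h2 : HasDerivAt (fun u : ℝ => Real.log (u⁻¹ - 1)) (-(u^2)⁻¹ / (u⁻¹ - 1)) u :=
    h1.log ha.ne'
  have h3 : HasDerivAt (fun u : ℝ => u - 1/2) 1 u := (hasDerivAt_id u).sub_const (1/2)
  have h4 := h2.div h3 hne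
  have key : (-(u^2)⁻¹ / (u⁻¹ - 1) * (u - 1/2) - Real.log (u⁻¹ - 1) * 1) / (u - 1/2)^2
      = (Real.sinh (Real.log (u⁻¹ - 1)) - Real.log (u⁻¹ - 1)) / (u - 1/2)^2 := by
    rw [Real.sinh_log ha]
    congr 1
    have h1u : (1 : ℝ) - u ≠ 0 := by linarith
    field_simp
    ring
  rw [key] at h4
  exact h4

theorem beta_half_monotonicity :
    StrictMonoOn (beta (1 / 2)) (Set.Ioo (0 : ℝ) (1 / 2)) ∧
      StrictAntiOn (beta (1 / 2)) (Set.Ioo (1 / 2 : ℝ) 1) := by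
  constructor
  · apply strictMonoOn_of_deriv_pos (convex_Ioo _ _)
    · intro x hx
      obtain ⟨hx0, hx2⟩ := hx
      exact (beta_hasDerivAt hx0 (by linarith) (by linarith)).continuousAt.continuousWithinAt
    · intro x hx
      rw [interior_Ioo] at hx
      obtain ⟨hx0, hx2⟩ := hx
      rw [(beta_hasDerivAt hx0 (by linarith) (by linarith)).deriv]
      apply div_pos
      · have ha : 1 < x⁻¹ - 1 := by
          have : 2 < x⁻¹ := by
            rw [lt_inv_comm₀ (by norm_num) hx0]; linarith
          linarith
        have hlog : 0 < Real.log (x⁻¹ - 1) := Real.log_pos ha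
        linarith [Real.self_lt_sinh_iff.mpr hlog]
      · have : x - 1/2 ≠ 0 := by intro h; nlinarith [hx2]
        positivity
  · apply strictAntiOn_of_deriv_neg (convex_Ioo _ _)
    · intro x hx
      obtain ⟨hx2, hx1⟩ := hx
      exact (beta_hasDerivAt (by linarith) hx1 (by linarith)).continuousAt.continuousWithinAt
    · intro x hx
      rw [interior_Ioo] at hx
      obtain ⟨hx2, hx1⟩ := hx
      rw [(beta_hasDerivAt (by linarith) hx1 (by linarith)).deriv]
      apply div_neg_of_neg_of_pos
      · have hx0 : (0:ℝ) < x := by linarith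
        have ha0 : 0 < x⁻¹ - 1 := by
          have : 1 < x⁻¹ := (one_lt_inv₀ hx0).mpr hx1
          linarith
        have ha1 : x⁻¹ - 1 < 1 := by
          have : x⁻¹ < 2 := by
            rw [inv_lt_comm₀ hx0 (by norm_num)]; linarith
          linarith
        have hlog : Real.log (x⁻¹ - 1) < 0 := Real.log_neg ha0 ha1
        linarith [Real.sinh_lt_self_iff.mpr hlog]
      · have : x - 1/2 ≠ 0 := by intro h; nlinarith [hx2]
        positivity
end

section
/- Let s be a real number with 1/2 < s < 1. Then the supremum of log(y⁻¹ − 1)/(y − x) over all pairs (x, y) with 1/2 ≤ x ≤ s and 0 < y ≤ 1 − x and (x, y) ≠ (1/2, 1/2) equals −2. -/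
/-!
With `t = 1 - 2y` one has `y⁻¹ - 1 = (1 + t) / (1 - t)`, so `log (y⁻¹ - 1) = 2 artanh t ≥ 2t`,
while on the region `0 < x - y ≤ t`; hence every quotient is at most `-2`. On the segment
`x + y = 1` the bound `log z ≤ z - 1` gives quotients `≥ -1/y`, which tends to `-2` as `y → 1/2`.
-/

open Real

lemma two_mul_le_log_one_add_sub_log_one_sub {t : ℝ} (ht0 : 0 ≤ t) (ht1 : t < 1) :
    2 * t ≤ log (1 + t) - log (1 - t) := by
  have hsum := hasSum_log_sub_log_of_abs_lt_one (by rwa [abs_of_nonneg ht0])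
  simpa using le_hasSum hsum 0 fun k _ => by positivity

lemma two_mul_one_sub_two_mul_le_log_inv_sub_one {y : ℝ} (hy0 : 0 < y) (hy : y ≤ 1 / 2) :
    2 * (1 - 2 * y) ≤ log (y⁻¹ - 1) := by
  have key := two_mul_le_log_one_add_sub_log_one_sub (t := 1 - 2 * y) (by linarith) (by linarith)
  have hquot : (1 + (1 - 2 * y)) / (1 - (1 - 2 * y)) = y⁻¹ - 1 := by field_simp; ring
  rwa [← log_div (by linarith) (by linarith), hquot] at key

lemma log_inv_sub_one_div_sub_le_neg_two {x y : ℝ} (hy0 : 0 < y) (hyx : y < x) (hxy : x + y ≤ 1) :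
    log (y⁻¹ - 1) / (y - x) ≤ -2 := by
  have := two_mul_one_sub_two_mul_le_log_inv_sub_one hy0 (by linarith)
  rw [div_le_iff_of_neg (by linarith)]
  linarith

lemma neg_inv_le_log_inv_sub_one_div {y : ℝ} (hy0 : 0 < y) (hy : y < 1 / 2) :
    -y⁻¹ ≤ log (y⁻¹ - 1) / (y - (1 - y)) := by
  have hpos : 0 < y⁻¹ - 1 := by linarith [one_lt_inv₀ hy0 |>.2 (by linarith)]
  have hlog := log_le_sub_one_of_pos hpos
  rw [le_div_iff_of_neg (by linarith)]
  calc log (y⁻¹ - 1) ≤ y⁻¹ - 1 - 1 := hlog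
    _ = -y⁻¹ * (y - (1 - y)) := by field_simp; ring

theorem sup_region_minus_eq_neg_two (s : ℝ) (hs : 1 / 2 < s) (hs1 : s < 1) :
    sSup {r : ℝ | ∃ x y : ℝ, 1 / 2 ≤ x ∧ x ≤ s ∧ 0 < y ∧ y ≤ 1 - x ∧
      (x, y) ≠ (1 / 2, 1 / 2) ∧ r = Real.log (y⁻¹ - 1) / (y - x)} = -2 := by
  set S := {r : ℝ | ∃ x y : ℝ, 1 / 2 ≤ x ∧ x ≤ s ∧ 0 < y ∧ y ≤ 1 - x ∧
      (x, y) ≠ (1 / 2, 1 / 2) ∧ r = Real.log (y⁻¹ - 1) / (y - x)}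
  have mem_antidiagonal : ∀ y, 1 - s ≤ y → y < 1 / 2 → log (y⁻¹ - 1) / (y - (1 - y)) ∈ S :=
    fun y hsy hy => ⟨1 - y, y, by linarith, by linarith, by linarith, by linarith,
      fun h => hy.ne (Prod.mk.inj h).2, rfl⟩
  refine csSup_eq_of_forall_le_of_forall_lt_exists_gt
    ⟨_, mem_antidiagonal (1 - s) le_rfl (by linarith)⟩ ?_ fun w hw => ?_
  · rintro r ⟨x, y, hx, -, hy0, hxy, hne, rfl⟩
    refine log_inv_sub_one_div_sub_le_neg_two hy0 (lt_of_not_ge fun hxy' => hne ?_) (by linarith)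
    rw [show x = 1 / 2 by linarith, show y = 1 / 2 by linarith]
  · have hw0 : 0 < -w := by linarith
    have hw2 : (-w)⁻¹ < 1 / 2 := inv_lt_of_inv_lt₀ (by norm_num) (by norm_num; linarith)
    obtain ⟨y, hy, hy2⟩ := exists_between (max_lt hw2 (show 1 - s < 1 / 2 by linarith))
    rw [max_lt_iff] at hy
    refine ⟨_, mem_antidiagonal y hy.2.le hy2, ?_⟩
    calc w < -y⁻¹ := by linarith [inv_lt_of_inv_lt₀ hw0 hy.1]
      _ ≤ _ := neg_inv_le_log_inv_sub_one_div (by linarith) hy2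
end

section
/- Let s be a real number with 1/2 < s < 1. Then the supremum of −log(x⁻¹ − 1)/(y − x) over all pairs (x, y) with 1/2 ≤ x ≤ s and 1 − x < y ≤ 1/2 equals −2. -/
/-!
Write `-log (x⁻¹ - 1) = log x - log (1 - x) = 2 artanh (2x - 1) ≥ 2 (2x - 1)`. Since `y - x < 0` and
`x - y < 2x - 1` on the region, every quotient is at most `-2`. Along `x = 1/2 + t`,
`y = 1/2 - t + t²` the numerator is `4t + o(t)` and the denominator `t² - 2t`, so the quotients
tend to `-2` as `t → 0⁺`.
-/

open Real Filter Topology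

namespace Real

theorem two_mul_le_log_one_add_sub_log_one_sub {u : ℝ} (hu₀ : 0 ≤ u) (hu₁ : u < 1) :
    2 * u ≤ log (1 + u) - log (1 - u) := by
  have h := hasSum_log_sub_log_of_abs_lt_one (abs_lt.2 ⟨by linarith, hu₁⟩)
  simpa using le_hasSum h 0 fun k _ => by positivity

theorem two_mul_two_mul_sub_one_le_log_sub_log_one_sub {x : ℝ} (hx : 1 / 2 ≤ x) (hx₁ : x < 1) :
    2 * (2 * x - 1) ≤ log x - log (1 - x) := by
  have h := two_mul_le_log_one_add_sub_log_one_sub (u := 2 * x - 1) (by linarith) (by linarith)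
  rwa [show 1 + (2 * x - 1) = 2 * x by ring, show 1 - (2 * x - 1) = 2 * (1 - x) by ring,
    log_mul two_ne_zero (by linarith), log_mul two_ne_zero (by linarith),
    add_sub_add_left_eq_sub] at h

theorem neg_log_inv_sub_one {x : ℝ} (hx₀ : 0 < x) (hx₁ : x < 1) :
    -log (x⁻¹ - 1) = log x - log (1 - x) := by
  rw [show x⁻¹ - 1 = (1 - x) / x by field_simp, log_div (by linarith) hx₀.ne']
  ring

theorem neg_log_inv_sub_one_div_sub_le {x y : ℝ} (hx₁ : x < 1) (hxy : 1 - x < y) (hyx : y < x) :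
    -log (x⁻¹ - 1) / (y - x) ≤ -2 := by
  have hx : 1 / 2 < x := by linarith
  rw [neg_log_inv_sub_one (by linarith) hx₁, div_le_iff_of_neg (sub_neg.2 hyx)]
  linarith [two_mul_two_mul_sub_one_le_log_sub_log_one_sub hx.le hx₁]

theorem hasDerivAt_log_add_sub_log_sub {a : ℝ} (ha : a ≠ 0) :
    HasDerivAt (fun t => log (a + t) - log (a - t)) (2 / a) 0 := by
  have h₁ := ((hasDerivAt_id (0 : ℝ)).const_add a).log (by simpa using ha)
  have h₂ := ((hasDerivAt_id (0 : ℝ)).const_sub a).log (by simpa using ha)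
  exact (h₁.sub h₂).congr_deriv (by simp; ring)

theorem tendsto_log_half_add_sub_log_half_sub_div :
    Tendsto (fun t => (log (1 / 2 + t) - log (1 / 2 - t)) / (t * (t - 2))) (𝓝[>] 0)
      (𝓝 (-2)) := by
  have hslope := (hasDerivAt_log_add_sub_log_sub (a := 1 / 2) (by norm_num)).tendsto_slope_zero_right
  have hinv : Tendsto (fun t : ℝ => (t - 2)⁻¹) (𝓝[>] 0) (𝓝 (0 - 2)⁻¹) :=
    (((continuous_id.sub continuous_const).tendsto 0).inv₀ (by norm_num)).mono_left
      nhdsWithin_le_nhds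
  convert hslope.mul hinv using 2 with t
  · simp only [add_zero, sub_zero, sub_self, smul_eq_mul, zero_add]
    rw [div_mul_eq_div_div_swap]
    ring
  · norm_num

end Real

theorem sup_region_plus_eq_neg_two (s : ℝ) (hs : 1 / 2 < s) (hs1 : s < 1) :
    sSup {r : ℝ | ∃ x y : ℝ, 1 / 2 ≤ x ∧ x ≤ s ∧ 1 - x < y ∧ y ≤ 1 / 2 ∧
      r = -Real.log (x⁻¹ - 1) / (y - x)} = -2 := by
  set S := {r : ℝ | ∃ x y : ℝ, 1 / 2 ≤ x ∧ x ≤ s ∧ 1 - x < y ∧ y ≤ 1 / 2 ∧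
      r = -Real.log (x⁻¹ - 1) / (y - x)}
  have hub : ∀ r ∈ S, r ≤ -2 := by
    rintro r ⟨x, y, hx, hxs, hxy, hy, rfl⟩
    exact neg_log_inv_sub_one_div_sub_le (by linarith) hxy (by linarith)
  have hmem : ∀ᶠ t in 𝓝[>] 0, (log (1 / 2 + t) - log (1 / 2 - t)) / (t * (t - 2)) ∈ S := by
    filter_upwards [Ioo_mem_nhdsGT (sub_pos.2 hs)] with t ⟨ht₀, hts⟩
    refine ⟨1 / 2 + t, 1 / 2 - t + t ^ 2, by linarith, by linarith, by nlinarith, by nlinarith, ?_⟩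
    rw [neg_log_inv_sub_one (by linarith) (by linarith)]
    ring_nf
  have hlub : IsLUB S (-2) :=
    ⟨hub, fun b hb => le_of_tendsto tendsto_log_half_add_sub_log_half_sub_div
      (hmem.mono fun t ht => hb ht)⟩
  exact hlub.csSup_eq (hmem.exists.elim fun _ ht => ⟨_, ht⟩)
end

section
/- Let s, t be real numbers with 0 < t < 1/2 ≤ s < 1 and s + t > 1. Then the supremum of log(y⁻¹ − 1)/(y − x) over all pairs (x, y) with 1/2 ≤ x ≤ s, 0 < y ≤ 1 − x, and y ≤ t equals log(t⁻¹ − 1)/(2t − 1). -/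
/-!
The numerator `log (y⁻¹ - 1)` is nonnegative and the denominator `y - x` negative, so for fixed
`y` the quotient is largest at `x = 1 - y`, where it equals `-log (y⁻¹ - 1) / (1 - 2y)`.
With `v = 1 - 2y` we have `log (y⁻¹ - 1) = log (1 + v) - log (1 - v)`, and
`(log (1 + v) - log (1 - v)) / v = ∑ 2 v ^ (2k) / (2k + 1)` increases with `v`; so the bound is
largest at the largest admissible `y`, namely `y = t`, `x = 1 - t` (admissible as `s + t > 1`).
-/

open Real Set

lemma hasSum_log_one_add_sub_log_one_sub_div {v : ℝ} (hv0 : v ≠ 0) (hv1 : |v| < 1) :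
    HasSum (fun k : ℕ => 2 / (2 * k + 1) * v ^ (2 * k)) ((log (1 + v) - log (1 - v)) / v) := by
  have hterm (k : ℕ) :
      2 * (1 / (2 * k + 1)) * v ^ (2 * k + 1) / v = 2 / (2 * k + 1) * v ^ (2 * k) := by
    field_simp
    ring
  simpa only [hterm] using (hasSum_log_sub_log_of_abs_lt_one hv1).div_const v

lemma monotoneOn_log_one_add_sub_log_one_sub_div :
    MonotoneOn (fun v : ℝ => (log (1 + v) - log (1 - v)) / v) (Ioo 0 1) := by
  intro w ⟨hw0, hw1⟩ v ⟨hv0, hv1⟩ hwv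
  refine hasSum_le (fun k => ?_)
    (hasSum_log_one_add_sub_log_one_sub_div hw0.ne' (by rwa [abs_of_pos hw0]))
    (hasSum_log_one_add_sub_log_one_sub_div hv0.ne' (by rwa [abs_of_pos hv0]))
  gcongr

lemma log_inv_sub_one_eq {y : ℝ} (hy0 : 0 < y) (hy1 : y < 1) :
    log (y⁻¹ - 1) = log (1 + (1 - 2 * y)) - log (1 - (1 - 2 * y)) := by
  rw [← log_div (by linarith) (by linarith)]
  congr 1
  field_simp
  ring

lemma log_inv_sub_one_nonneg {y : ℝ} (hy0 : 0 < y) (hy : y ≤ 1 / 2) : 0 ≤ log (y⁻¹ - 1) := by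
  apply log_nonneg
  rw [le_sub_iff_add_le, le_inv_comm₀ (by norm_num) hy0]
  linarith

lemma antitoneOn_log_inv_sub_one_div :
    AntitoneOn (fun y : ℝ => log (y⁻¹ - 1) / (1 - 2 * y)) (Ioo 0 (1 / 2)) := by
  intro a ⟨ha0, ha⟩ b ⟨hb0, hb⟩ hab
  have key := monotoneOn_log_one_add_sub_log_one_sub_div
    (⟨by linarith, by linarith⟩ : 1 - 2 * b ∈ Ioo (0 : ℝ) 1) ⟨by linarith, by linarith⟩
    (by linarith : 1 - 2 * b ≤ 1 - 2 * a)
  simpa only [← log_inv_sub_one_eq hb0 (by linarith), ← log_inv_sub_one_eq ha0 (by linarith)]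
    using key

theorem sup_region_minus_case2_general (s t : ℝ) (ht : 0 < t) (ht2 : t < 1 / 2)
    (hst : s + t > 1) :
    sSup {r : ℝ | ∃ x y : ℝ, 1 / 2 ≤ x ∧ x ≤ s ∧ 0 < y ∧ y ≤ 1 - x ∧ y ≤ t ∧
      r = Real.log (y⁻¹ - 1) / (y - x)} = Real.log (t⁻¹ - 1) / (2 * t - 1) := by
  refine IsGreatest.csSup_eq
    ⟨⟨1 - t, t, by linarith, by linarith, ht, by linarith, le_rfl, by ring_nf⟩, ?_⟩
  rintro r ⟨x, y, hx, -, hy0, hyx, hyt, rfl⟩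
  have hy : y ∈ Ioo 0 (1 / 2) := ⟨hy0, by linarith⟩
  calc log (y⁻¹ - 1) / (y - x) = -(log (y⁻¹ - 1) / (x - y)) := by rw [← neg_sub x, div_neg]
    _ ≤ -(log (y⁻¹ - 1) / (1 - 2 * y)) :=
        neg_le_neg <| div_le_div_of_nonneg_left (log_inv_sub_one_nonneg hy0 hy.2.le)
          (by linarith) (by linarith)
    _ ≤ -(log (t⁻¹ - 1) / (1 - 2 * t)) :=
        neg_le_neg <| antitoneOn_log_inv_sub_one_div hy ⟨ht, ht2⟩ hyt
    _ = log (t⁻¹ - 1) / (2 * t - 1) := by rw [← div_neg, neg_sub]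

theorem sup_region_minus_case2 (s t : ℝ) (ht : 0 < t) (ht2 : t < 1 / 2)
    (hs : 1 / 2 ≤ s) (hs1 : s < 1) (hst : s + t > 1) :
    sSup {r : ℝ | ∃ x y : ℝ, 1 / 2 ≤ x ∧ x ≤ s ∧ 0 < y ∧ y ≤ 1 - x ∧ y ≤ t ∧
      r = Real.log (y⁻¹ - 1) / (y - x)} = Real.log (t⁻¹ - 1) / (2 * t - 1) :=
  sup_region_minus_case2_general s t ht ht2 hst
end

section
/- Let s, t be real numbers with 0 < t < 1/2 and 1 − t ≤ s < 1. Then the supremum of β_x(1−x) = log((1−x)⁻¹ − 1)/(1 − 2x) over x ∈ [1−t, s] equals (1/2) β_{1/2}(t) = log(t⁻¹ − 1)/(2t − 1), and it is attained at x = 1 − t. -/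
open Real Set

lemma h_hasDerivAt {u : ℝ} (hu0 : 0 < u) (hu : u < 1/2) :
    HasDerivAt (fun u : ℝ => Real.log (u⁻¹ - 1)) (-(u*(1-u))⁻¹) u := by
  have hne : u ≠ 0 := ne_of_gt hu0
  have harg : (0:ℝ) < u⁻¹ - 1 := by
    have : (2:ℝ) < u⁻¹ := by
      rw [lt_inv_comm₀ (by norm_num) hu0]; linarith
    linarith
  have h1 : HasDerivAt (fun u : ℝ => u⁻¹ - 1) (-(u^2)⁻¹) u :=
    (hasDerivAt_inv hne).sub_const 1
  have := h1.log (ne_of_gt harg)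
  convert this using 1
  have hu1 : (1:ℝ) - u ≠ 0 := by linarith
  field_simp

lemma h_convex : ConvexOn ℝ (Set.Ioc (0:ℝ) (1/2)) (fun u : ℝ => Real.log (u⁻¹ - 1)) := by
  have hint : interior (Set.Ioc (0:ℝ) (1/2)) = Set.Ioo (0:ℝ) (1/2) := interior_Ioc
  apply MonotoneOn.convexOn_of_deriv (convex_Ioc _ _)
  · apply ContinuousOn.log
    · exact (continuousOn_inv₀.mono (by intro x hx; exact ne_of_gt hx.1)).sub continuousOn_const
    · intro x hx
      have h2 : (2:ℝ) ≤ x⁻¹ := by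
        rw [le_inv_comm₀ (by norm_num) hx.1]; linarith [hx.2]
      have : (0:ℝ) < x⁻¹ - 1 := by linarith
      exact ne_of_gt this
  · rw [hint]
    intro x hx
    exact (h_hasDerivAt hx.1 hx.2).differentiableAt.differentiableWithinAt
  · rw [hint]
    intro x hx y hy hxy
    rw [(h_hasDerivAt hx.1 hx.2).deriv, (h_hasDerivAt hy.1 hy.2).deriv]
    have hx1 : 0 < x * (1 - x) := by nlinarith [hx.1, hx.2]
    have hy1 : 0 < y * (1 - y) := by nlinarith [hy.1, hy.2]
    have : x * (1 - x) ≤ y * (1 - y) := by nlinarith [hx.1, hx.2, hy.1, hy.2]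
    have := one_div_le_one_div_of_le hx1 this
    simp only [one_div] at this
    linarith

lemma g_mono {u t : ℝ} (hu0 : 0 < u) (hut : u ≤ t) (ht2 : t < 1/2) :
    Real.log (u⁻¹ - 1) / (2*u - 1) ≤ Real.log (t⁻¹ - 1) / (2*t - 1) := by
  rcases eq_or_lt_of_le hut with rfl | hlt
  · exact le_rfl
  have hmem_u : u ∈ Set.Ioc (0:ℝ) (1/2) := ⟨hu0, by linarith⟩
  have hmem_t : t ∈ Set.Ioc (0:ℝ) (1/2) := ⟨by linarith, by linarith⟩
  have hmem_a : (1/2:ℝ) ∈ Set.Ioc (0:ℝ) (1/2) := ⟨by norm_num, le_refl _⟩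
  have key := h_convex.secant_mono hmem_a hmem_u hmem_t (by linarith) (by linarith) hut
  have ha : Real.log ((1/2:ℝ)⁻¹ - 1) = 0 := by norm_num
  rw [ha, sub_zero, sub_zero] at key
  have e1 : Real.log (u⁻¹ - 1) / (2*u - 1) = (Real.log (u⁻¹ - 1) / (u - 1/2)) / 2 := by
    rw [div_div]; congr 1; ring
  have e2 : Real.log (t⁻¹ - 1) / (2*t - 1) = (Real.log (t⁻¹ - 1) / (t - 1/2)) / 2 := by
    rw [div_div]; congr 1; ring
  rw [e1, e2]
  linarith

theorem sup_beta_x_one_sub_x (s t : ℝ) (ht : 0 < t) (ht2 : t < 1 / 2)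
    (hs : 1 - t ≤ s) (hs1 : s < 1) :
    IsGreatest ((fun x : ℝ => Real.log ((1 - x)⁻¹ - 1) / (1 - 2 * x)) ''
        Set.Icc (1 - t) s) (Real.log (t⁻¹ - 1) / (2 * t - 1)) ∧
      Real.log ((1 - (1 - t))⁻¹ - 1) / (1 - 2 * (1 - t)) =
        Real.log (t⁻¹ - 1) / (2 * t - 1) ∧
      Real.log (t⁻¹ - 1) / (2 * t - 1) = (1 / 2) * beta (1 / 2) t := by
  have heq : Real.log ((1 - (1 - t))⁻¹ - 1) / (1 - 2 * (1 - t)) =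
      Real.log (t⁻¹ - 1) / (2 * t - 1) := by
    rw [show (1:ℝ) - (1 - t) = t by ring, show (1:ℝ) - 2 * (1 - t) = 2 * t - 1 by ring]
  refine ⟨⟨⟨1 - t, ⟨le_refl _, hs⟩, heq⟩, ?_⟩, heq, ?_⟩
  · rintro y ⟨x, hx, rfl⟩
    have hu0 : 0 < 1 - x := by linarith [hx.2]
    have hut : 1 - x ≤ t := by linarith [hx.1]
    have := g_mono hu0 hut ht2
    show Real.log ((1 - x)⁻¹ - 1) / (1 - 2 * x) ≤ _
    rw [show 1 - 2 * x = 2 * (1 - x) - 1 by ring]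
    exact this
  · rw [beta]
    have h12 : t - 1/2 ≠ 0 := by linarith
    field_simp
end

section
/- Let p, q be real numbers with 1 < p ≤ 2 < q and 1/p + 1/q > 1. Then (q−1)^{(q−p)/(p(q−2))} ≤ 1/(p−1); that is, the constant (q−1)^{((q−p)/(p(q−2))) · (d/2)} is at most the constant (p−1)^{−d/2} for every positive integer d. -/
/-!
Put `r = q - 1` and `s = 1 / (p - 1)`; then `1 / p + 1 / q > 1` says exactly `r < s`, and the
exponent is `(r s - 1) / ((s + 1)(r - 1))`. Taking logarithms, the claim becomes
`(r s - 1) log r ≤ (s + 1)(r - 1) log s`, i.e. `f r ≤ (r - 1) / (s - 1) · f s` for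
`f x = (x s - 1) log x`. This is the chord inequality for `f` on `[1, s]`: `f` is convex on
`[1, ∞)` as the sum of `s · x log x` and `-log x`, and `f 1 = 0`.
-/

open Real Set

lemma convexOn_mul_sub_one_mul_log {s : ℝ} (hs : 0 ≤ s) :
    ConvexOn ℝ (Ici 1) (fun x ↦ (x * s - 1) * log x) := by
  have hxlog : ConvexOn ℝ (Ici 1) (fun x ↦ s * (x * log x)) :=
    (convexOn_mul_log.subset (Ici_subset_Ici.2 zero_le_one) (convex_Ici 1)).smul hs
  have hneglog : ConvexOn ℝ (Ici 1) (fun x ↦ -log x) :=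
    (strictConcaveOn_log_Ioi.concaveOn.subset (fun x hx ↦ zero_lt_one.trans_le hx)
      (convex_Ici 1)).neg
  refine (hxlog.add hneglog).congr fun x _ ↦ ?_
  simp only [Pi.add_apply]
  ring

lemma mul_sub_one_mul_log_le {r s : ℝ} (hr : 1 < r) (hrs : r < s) :
    (r * s - 1) * log r ≤ (s + 1) * (r - 1) * log s := by
  have hs : 0 < s - 1 := by linarith
  have hchord := (convexOn_mul_sub_one_mul_log (by linarith : 0 ≤ s)).secant_mono_aux1
    (self_mem_Ici (a := 1)) (mem_Ici.2 (by linarith : 1 ≤ s)) hr hrs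
  simp only [log_one, mul_zero] at hchord
  refine le_of_mul_le_mul_left ?_ hs
  linarith

lemma rpow_div_le {r s : ℝ} (hr : 1 < r) (hrs : r < s) :
    r ^ ((r * s - 1) / ((s + 1) * (r - 1))) ≤ s := by
  have hden : 0 < (s + 1) * (r - 1) := mul_pos (by linarith) (by linarith)
  rw [rpow_le_iff_le_log (by linarith) (by linarith), div_mul_eq_mul_div, div_le_iff₀ hden,
    mul_comm (log s)]
  exact mul_sub_one_mul_log_le hr hrs

theorem constant_case2_improves_general (p q : ℝ) (hp : 1 < p) (hq : 2 < q)
    (hpq : 1 / p + 1 / q > 1) :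
    (q - 1) ^ ((q - p) / (p * (q - 2))) ≤ 1 / (p - 1) ∧
      ∀ d : ℕ, 0 < d →
        (q - 1) ^ ((q - p) / (p * (q - 2)) * ((d : ℝ) / 2)) ≤
          (p - 1) ^ (-((d : ℝ) / 2)) := by
  have hp1 : 0 < p - 1 := by linarith
  have hq1 : 1 < q - 1 := by linarith
  have hsum : p * q < p + q := by
    rw [div_add_div _ _ (by positivity) (by positivity), gt_iff_lt,
      lt_div_iff₀ (by positivity)] at hpq
    linarith
  have hrs : q - 1 < 1 / (p - 1) := by
    rw [lt_div_iff₀ hp1]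
    nlinarith
  have hexp : ((q - 1) * (1 / (p - 1)) - 1) / ((1 / (p - 1) + 1) * (q - 1 - 1)) =
      (q - p) / (p * (q - 2)) := by
    field_simp
    ring
  have hmain := hexp ▸ rpow_div_le hq1 hrs
  refine ⟨hmain, fun d _ ↦ ?_⟩
  rw [rpow_mul (by linarith), rpow_neg hp1.le, ← inv_rpow hp1.le, ← one_div]
  exact rpow_le_rpow (rpow_nonneg (by linarith) _) hmain (by positivity)

theorem constant_case2_improves (p q : ℝ) (hp : 1 < p) (hp2 : p ≤ 2) (hq : 2 < q)
    (hpq : 1 / p + 1 / q > 1) :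
    (q - 1) ^ ((q - p) / (p * (q - 2))) ≤ 1 / (p - 1) ∧
      ∀ d : ℕ, 0 < d →
        (q - 1) ^ ((q - p) / (p * (q - 2)) * ((d : ℝ) / 2)) ≤
          (p - 1) ^ (-((d : ℝ) / 2)) :=
  constant_case2_improves_general p q hp hq hpq
end

section
/- The function u ↦ u + u(1−u)·log(u⁻¹ − 1) is strictly increasing on the interval (0,1). -/
/-!
The derivative of `u + u(1-u) log(u⁻¹ - 1)` is `(1 - 2u) log(u⁻¹ - 1)`: the factor `u(1-u)`
exactly cancels the derivative `-1/(u(1-u))` of the logarithm. Since `1 - 2u = u((u⁻¹ - 1) - 1)`,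
this is `u (x - 1) log x` with `x = u⁻¹ - 1 > 0`, which is positive unless `x = 1`, i.e. `u = 1/2`.
A single zero of the derivative does not spoil strict monotonicity.
-/

open Set Real

lemma sub_one_mul_log_pos {x : ℝ} (hx : 0 < x) (hx1 : x ≠ 1) : 0 < (x - 1) * log x := by
  rcases hx1.lt_or_gt with hlt | hgt
  · exact mul_pos_of_neg_of_neg (by linarith) (log_neg hx hlt)
  · exact mul_pos (by linarith) (log_pos hgt)

lemma strictMonoOn_Ioo_of_hasDerivAt_pos_of_ne {f f' : ℝ → ℝ} {a b c : ℝ} (hc : c ∈ Ioo a b)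
    (hf : ∀ x ∈ Ioo a b, HasDerivAt f (f' x) x) (hf' : ∀ x ∈ Ioo a b, x ≠ c → 0 < f' x) :
    StrictMonoOn f (Ioo a b) := by
  have hcont : ContinuousOn f (Ioo a b) := fun x hx ↦ (hf x hx).continuousAt.continuousWithinAt
  have left : StrictMonoOn f (Ioc a c) := by
    refine strictMonoOn_of_hasDerivWithinAt_pos (f' := f') (convex_Ioc a c)
      (hcont.mono (Ioc_subset_Ioo_right hc.2)) (fun x hx ↦ ?_) fun x hx ↦ ?_
    all_goals rw [interior_Ioc] at hx
    · exact (hf x ⟨hx.1, hx.2.trans hc.2⟩).hasDerivWithinAt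
    · exact hf' x ⟨hx.1, hx.2.trans hc.2⟩ hx.2.ne
  have right : StrictMonoOn f (Ico c b) := by
    refine strictMonoOn_of_hasDerivWithinAt_pos (f' := f') (convex_Ico c b)
      (hcont.mono (Ico_subset_Ioo_left hc.1)) (fun x hx ↦ ?_) fun x hx ↦ ?_
    all_goals rw [interior_Ico] at hx
    · exact (hf x ⟨hc.1.trans hx.1, hx.2⟩).hasDerivWithinAt
    · exact hf' x ⟨hc.1.trans hx.1, hx.2⟩ hx.1.ne'
  rw [← Ioc_union_Ico_eq_Ioo hc.1 hc.2]
  exact left.union right (isGreatest_Ioc hc.1) (isLeast_Ico hc.2)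

lemma inv_sub_one_pos {u : ℝ} (hu : u ∈ Ioo (0 : ℝ) 1) : 0 < u⁻¹ - 1 :=
  sub_pos.2 (one_lt_inv₀ hu.1 |>.2 hu.2)

lemma hasDerivAt_log_inv_sub_one {u : ℝ} (hu : u ∈ Ioo (0 : ℝ) 1) :
    HasDerivAt (fun u ↦ log (u⁻¹ - 1)) (-(u * (1 - u))⁻¹) u := by
  have h := ((hasDerivAt_inv hu.1.ne').sub_const 1).log (inv_sub_one_pos hu).ne'
  convert h using 1
  have : 1 - u ≠ 0 := by linarith [hu.2]
  field_simp [hu.1.ne']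

lemma hasDerivAt_add_mul_one_sub_mul_log {u : ℝ} (hu : u ∈ Ioo (0 : ℝ) 1) :
    HasDerivAt (fun u ↦ u + u * (1 - u) * log (u⁻¹ - 1)) ((1 - 2 * u) * log (u⁻¹ - 1)) u := by
  have hpoly : HasDerivAt (fun u : ℝ ↦ u * (1 - u)) (1 - 2 * u) u := by
    refine ((hasDerivAt_id' u).fun_mul ((hasDerivAt_id' u).const_sub 1)).congr_deriv ?_
    ring
  refine ((hasDerivAt_id' u).fun_add (hpoly.fun_mul (hasDerivAt_log_inv_sub_one hu))).congr_deriv ?_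
  have : u * (1 - u) ≠ 0 := mul_ne_zero hu.1.ne' (by linarith [hu.2])
  rw [mul_neg, mul_inv_cancel₀ this]
  ring

lemma one_sub_two_mul_mul_log_pos {u : ℝ} (hu : u ∈ Ioo (0 : ℝ) 1) (h : u ≠ 1 / 2) :
    0 < (1 - 2 * u) * log (u⁻¹ - 1) := by
  have hx1 : u⁻¹ - 1 ≠ 1 := fun h' ↦ h <| by
    rw [← inv_inv u, show u⁻¹ = 2 by linarith]
    norm_num
  have hfactor : (1 - 2 * u) * log (u⁻¹ - 1) = u * ((u⁻¹ - 1 - 1) * log (u⁻¹ - 1)) := by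
    field_simp [hu.1.ne']
    ring
  rw [hfactor]
  exact mul_pos hu.1 (sub_one_mul_log_pos (inv_sub_one_pos hu) hx1)

theorem strictMonoOn_aux :
    StrictMonoOn (fun u : ℝ => u + u * (1 - u) * Real.log (u⁻¹ - 1))
      (Set.Ioo (0 : ℝ) 1) :=
  strictMonoOn_Ioo_of_hasDerivAt_pos_of_ne (c := 1 / 2) (by norm_num)
    (fun _ hu ↦ hasDerivAt_add_mul_one_sub_mul_log hu) fun _ hu h ↦ one_sub_two_mul_mul_log_pos hu h
end
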